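/- For real a, b with c − a − b > 0 and c not a nonpositive integer, the Gauss hypergeometric series ∑_{n=0}^∞ (a)_n (b)_n / ((c)_n n!) converges and equals Γ(c) Γ(c − a − b) / (Γ(c − a) Γ(c − b)). -/

import Mathlib

/-!
The series converges by comparison with `n! / (γ)ₙ` for `2 < γ < 2 + (c - a - b)`, whose partial
sums telescope. Summing the recurrence of the terms `Tₙ` over `n`, with the boundary term
`n Tₙ → 0`, gives the contiguous relation `c (c - a - b) F(c) = (c - a) (c - b) F(c + 1)` for
`F(c) = ₂F₁(a, b; c; 1)`. Iterating it,
`F(c) = (c - a)ₘ (c - b)ₘ / ((c)ₘ (c - a - b)ₘ) · F(c + m)`. As `m → ∞`, `F(c + m) → 1` by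
dominated convergence, and the Pochhammer quotient tends to the Gamma quotient by Euler's limit
formula `Γ(s) = lim n ^ s n! / (s)ₙ₊₁`.
-/

open Real BigOperators

noncomputable def poch (a : ℝ) (n : ℕ) : ℝ := ∏ i ∈ Finset.range n, (a + i)

noncomputable def digamma (x : ℝ) : ℝ := deriv Real.Gamma x / Real.Gamma x

open Filter Topology Asymptotics
open scoped Nat

@[simp]
lemma poch_zero (a : ℝ) : poch a 0 = 1 := by simp [poch]

lemma poch_succ (a : ℝ) (n : ℕ) : poch a (n + 1) = poch a n * (a + n) :=
  Finset.prod_range_succ _ n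

lemma poch_succ' (a : ℝ) (n : ℕ) : poch a (n + 1) = a * poch (a + 1) n := by
  simp only [poch, Finset.prod_range_succ', Nat.cast_add, Nat.cast_one, Nat.cast_zero, add_zero,
    add_assoc, add_comm (1 : ℝ)]
  ring

lemma poch_pos {a : ℝ} (ha : 0 < a) (n : ℕ) : 0 < poch a n :=
  Finset.prod_pos fun i _ => by positivity

lemma poch_nonneg {a : ℝ} (ha : 0 ≤ a) (n : ℕ) : 0 ≤ poch a n :=
  Finset.prod_nonneg fun i _ => by positivity

lemma poch_neg_natCast_eq_zero {k m : ℕ} (hkm : k < m) : poch (-k) m = 0 :=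
  Finset.prod_eq_zero (Finset.mem_range.2 hkm) (by ring)

lemma poch_le_poch {a b : ℝ} (ha : 0 ≤ a) (hab : a ≤ b) (n : ℕ) : poch a n ≤ poch b n :=
  Finset.prod_le_prod (fun i _ => by positivity) fun i _ => by linarith

lemma abs_poch_le {a A : ℝ} (hA : |a| ≤ A) (n : ℕ) : |poch a n| ≤ poch A n := by
  rw [poch, poch, Finset.abs_prod]
  refine Finset.prod_le_prod (fun i _ => abs_nonneg _) fun i _ => ?_
  calc |a + i| ≤ |a| + i := by simpa using abs_add_le a (i : ℝ)
    _ ≤ A + i := by linarith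

lemma one_le_poch {a : ℝ} (ha : 1 ≤ a) (n : ℕ) : 1 ≤ poch a n :=
  Finset.one_le_prod fun i _ => by have : (0 : ℝ) ≤ i := i.cast_nonneg; linarith

lemma tendsto_poch_atTop (n : ℕ) : Tendsto (fun x => poch x (n + 1)) atTop atTop := by
  refine tendsto_atTop_mono' atTop ?_ tendsto_id
  filter_upwards [eventually_ge_atTop 1] with x hx
  rw [poch_succ', id]
  exact le_mul_of_one_le_right (by linarith) (one_le_poch (by linarith) n)

lemma GammaSeq_eq (s : ℝ) (n : ℕ) : GammaSeq s n = n ^ s * n ! / poch s (n + 1) := rfl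

lemma isBigO_of_abs_succ_mul_le {f g : ℕ → ℝ} (hg : ∀ n, 0 < g n)
    (h : ∀ᶠ n in atTop, |f (n + 1)| * g n ≤ |f n| * g (n + 1)) : f =O[atTop] g := by
  obtain ⟨N, hN⟩ := eventually_atTop.1 h
  have hanti : Antitone fun k => |f (N + k)| / g (N + k) := by
    refine antitone_nat_of_succ_le fun k => ?_
    rw [div_le_div_iff₀ (hg _) (hg _)]
    exact hN (N + k) (Nat.le_add_right N k)
  refine IsBigO.of_bound (|f N| / g N) ?_
  filter_upwards [eventually_ge_atTop N] with n hn
  obtain ⟨k, rfl⟩ := Nat.exists_eq_add_of_le hn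
  have : |f (N + k)| / g (N + k) ≤ |f (N + 0)| / g (N + 0) := hanti (Nat.zero_le k)
  rw [add_zero, div_le_iff₀ (hg _)] at this
  rwa [Real.norm_eq_abs, Real.norm_eq_abs, abs_of_pos (hg _)]

noncomputable def factorialDivPoch (γ : ℝ) (n : ℕ) : ℝ := n ! / poch γ n

lemma factorialDivPoch_pos {γ : ℝ} (hγ : 0 < γ) (n : ℕ) : 0 < factorialDivPoch γ n :=
  div_pos (by positivity) (poch_pos hγ n)

lemma factorialDivPoch_succ (γ : ℝ) (n : ℕ) :
    factorialDivPoch γ (n + 1) = factorialDivPoch γ n * ((n + 1) / (γ + n)) := by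
  rw [factorialDivPoch, factorialDivPoch, div_mul_div_comm (n ! : ℝ), poch_succ,
    Nat.factorial_succ]
  push_cast
  ring

lemma sub_two_mul_sum_factorialDivPoch {γ : ℝ} (hγ : 0 < γ) (N : ℕ) :
    (γ - 2) * ∑ n ∈ Finset.range N, factorialDivPoch γ n
      = (γ - 1) - (N + γ - 1) * factorialDivPoch γ N := by
  induction N with
  | zero => simp [factorialDivPoch]
  | succ N ih =>
    have : γ + N ≠ 0 := by positivity
    rw [Finset.sum_range_succ, mul_add, ih, factorialDivPoch_succ]
    push_cast
    field_simp
    ring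

lemma summable_factorialDivPoch {γ : ℝ} (hγ : 2 < γ) : Summable (factorialDivPoch γ) := by
  have hγ0 : 0 < γ := by linarith
  refine summable_of_sum_range_le (c := (γ - 1) / (γ - 2))
    (fun n => (factorialDivPoch_pos hγ0 n).le) fun N => ?_
  rw [le_div_iff₀ (by linarith), mul_comm, sub_two_mul_sum_factorialDivPoch hγ0]
  have : 0 ≤ (N + γ - 1) * factorialDivPoch γ N :=
    mul_nonneg (by linarith [N.cast_nonneg (α := ℝ)]) (factorialDivPoch_pos hγ0 N).le
  linarith

lemma tendsto_mul_factorialDivPoch {γ : ℝ} (hγ : 2 < γ) :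
    Tendsto (fun n : ℕ => n * factorialDivPoch γ n) atTop (𝓝 0) := by
  have hγ0 : 0 < γ := by linarith
  -- Euler's limit: `factorialDivPoch γ n ≈ Γ(γ) n ^ (1 - γ)`, read off from `GammaSeq γ n`.
  have hpow : Tendsto (fun n : ℕ => (1 + γ / n) * (n : ℝ) ^ (-(γ - 2))) atTop (𝓝 0) := by
    have h1 : Tendsto (fun n : ℕ => 1 + γ / (n : ℝ)) atTop (𝓝 (1 + 0)) :=
      tendsto_const_nhds.add (tendsto_const_div_atTop_nhds_zero_nat γ)
    have h2 := h1.mul <|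
      (tendsto_rpow_neg_atTop (y := γ - 2) (by linarith)).comp tendsto_natCast_atTop_atTop
    rw [mul_zero] at h2
    exact h2
  have := hpow.mul (GammaSeq_tendsto_Gamma γ)
  rw [zero_mul] at this
  refine this.congr' ?_
  filter_upwards [eventually_gt_atTop 0] with n hn
  have hn : (0 : ℝ) < n := by exact_mod_cast hn
  have : γ + n ≠ 0 := by positivity
  rw [GammaSeq_eq, poch_succ, factorialDivPoch, Real.rpow_neg hn.le, Real.rpow_sub hn,
    Real.rpow_two]
  field_simp
  ring

section GaussSeries

variable {a b c : ℝ}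

noncomputable def hypergeomTerm (a b c : ℝ) (n : ℕ) : ℝ := poch a n * poch b n / (poch c n * n !)

noncomputable def hypergeom (a b c : ℝ) : ℝ := ∑' n, hypergeomTerm a b c n

lemma hypergeomTerm_succ (a b c : ℝ) (n : ℕ) :
    hypergeomTerm a b c (n + 1)
      = hypergeomTerm a b c n * ((a + n) * (b + n) / ((c + n) * (n + 1))) := by
  rw [hypergeomTerm, hypergeomTerm, div_mul_div_comm (poch a n * poch b n), poch_succ, poch_succ,
    poch_succ, Nat.factorial_succ]
  push_cast
  ring

lemma hypergeomTerm_add_one (a b : ℝ) (hc : c ≠ 0) (n : ℕ) :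
    hypergeomTerm a b (c + 1) n = hypergeomTerm a b c n * (c / (c + n)) := by
  rw [hypergeomTerm, hypergeomTerm, div_mul_div_comm (poch a n * poch b n),
    mul_right_comm (poch c n), ← poch_succ, poch_succ', mul_comm _ c, mul_assoc c,
    mul_div_mul_left _ _ hc]

lemma eventually_quadratic_pos {α : ℝ} (hα : 0 < α) (β γ : ℝ) :
    ∀ᶠ x : ℝ in atTop, 0 < α * x ^ 2 + β * x + γ := by
  have : Tendsto (fun x : ℝ => x * (α * x + β) + γ) atTop atTop :=
    tendsto_atTop_add_const_right _ γ <| tendsto_id.atTop_mul_atTop₀ <|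
      tendsto_atTop_add_const_right _ β <| tendsto_id.const_mul_atTop hα
  filter_upwards [this.eventually_gt_atTop 0] with x hx
  linarith

/-- Raabe's test: any `2 < γ < 2 + (c - a - b)` works, since the ratio of consecutive terms is
`1 - (1 + c - a - b) / n + O(n⁻²)`, against `1 - (γ - 1) / n + O(n⁻²)` for `factorialDivPoch γ`. -/
lemma hypergeomTerm_isBigO (h : 0 < c - a - b) :
    hypergeomTerm a b c =O[atTop] factorialDivPoch (2 + (c - a - b) / 2) := by
  set γ := 2 + (c - a - b) / 2 with hγdef
  have hγ : 0 < γ := by positivity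
  refine isBigO_of_abs_succ_mul_le (factorialDivPoch_pos hγ) ?_
  have hquad := tendsto_natCast_atTop_atTop.eventually <| eventually_quadratic_pos
    (by positivity : 0 < (c - a - b) / 2) (2 * c + 1 - (a * b + a * γ + b * γ)) (c - a * b * γ)
  have hlin (s : ℝ) : ∀ᶠ n : ℕ in atTop, 0 < s + n :=
    tendsto_natCast_atTop_atTop.eventually (eventually_gt_atTop (-s)) |>.mono fun n hn => by
      linarith
  filter_upwards [hquad, hlin a, hlin b, hlin c] with n hn ha hb hc
  have hcubic : (c + n) * (n + 1) ^ 2 - (a + n) * (b + n) * (γ + n)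
      = (c - a - b) / 2 * n ^ 2 + (2 * c + 1 - (a * b + a * γ + b * γ)) * n + (c - a * b * γ) := by
    rw [hγdef]
    ring
  have hratio : (a + n) * (b + n) / ((c + n) * (n + 1)) ≤ (n + 1) / (γ + n) := by
    rw [div_le_div_iff₀ (by positivity) (by positivity)]
    nlinarith
  have hr : 0 < (a + n) * (b + n) / ((c + n) * (n + 1)) := by positivity
  have hv := factorialDivPoch_pos hγ n
  rw [hypergeomTerm_succ, factorialDivPoch_succ, abs_mul, abs_of_pos hr]
  calc |hypergeomTerm a b c n| * ((a + n) * (b + n) / ((c + n) * (n + 1))) * factorialDivPoch γ n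
      ≤ |hypergeomTerm a b c n| * ((n + 1) / (γ + n)) * factorialDivPoch γ n := by gcongr
    _ = _ := by ring

lemma summable_hypergeomTerm (h : 0 < c - a - b) : Summable (hypergeomTerm a b c) :=
  summable_of_isBigO_nat (summable_factorialDivPoch (by linarith)) (hypergeomTerm_isBigO h)

lemma tendsto_mul_hypergeomTerm (h : 0 < c - a - b) :
    Tendsto (fun n : ℕ => n * hypergeomTerm a b c n) atTop (𝓝 0) :=
  ((isBigO_refl _ _).mul (hypergeomTerm_isBigO h)).trans_tendsto
    (tendsto_mul_factorialDivPoch (by linarith))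

lemma mul_sum_range_hypergeomTerm (hc : ∀ n : ℕ, c + n ≠ 0) (N : ℕ) :
    c * (c - a - b) * ∑ n ∈ Finset.range N, hypergeomTerm a b c n
      = (c - a) * (c - b) * ∑ n ∈ Finset.range N, hypergeomTerm a b (c + 1) n
        - c * (N * hypergeomTerm a b c N) := by
  induction N with
  | zero => simp
  | succ N ih =>
    have hc0 : c ≠ 0 := by simpa using hc 0
    have hcN := hc N
    have hN : (N : ℝ) + 1 ≠ 0 := by positivity
    rw [Finset.sum_range_succ, Finset.sum_range_succ, mul_add, mul_add, ih,
      hypergeomTerm_succ, hypergeomTerm_add_one a b hc0]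
    push_cast
    field_simp
    ring

lemma hypergeom_eq_mul_hypergeom_add_one (h : 0 < c - a - b) (hc : ∀ n : ℕ, c + n ≠ 0) :
    hypergeom a b c = (c - a) * (c - b) / (c * (c - a - b)) * hypergeom a b (c + 1) := by
  have hc0 : c ≠ 0 := by simpa using hc 0
  have hlhs := ((summable_hypergeomTerm h).hasSum.tendsto_sum_nat.const_mul
    (c * (c - a - b))).congr (mul_sum_range_hypergeomTerm hc)
  have hrhs := ((summable_hypergeomTerm (a := a) (b := b) (c := c + 1)
    (by linarith)).hasSum.tendsto_sum_nat.const_mul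
    ((c - a) * (c - b))).sub ((tendsto_mul_hypergeomTerm h).const_mul c)
  have := tendsto_nhds_unique hlhs hrhs
  rw [mul_zero, sub_zero] at this
  rw [div_mul_eq_mul_div, eq_div_iff (mul_ne_zero hc0 h.ne'), mul_comm]
  exact this

lemma hypergeom_eq_poch_mul_hypergeom_add_nat (h : 0 < c - a - b) (hc : ∀ n : ℕ, c + n ≠ 0)
    (m : ℕ) : hypergeom a b c
      = poch (c - a) m * poch (c - b) m / (poch c m * poch (c - a - b) m)
        * hypergeom a b (c + m) := by
  induction m with
  | zero => simp
  | succ m ih =>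
    have hm : 0 < c + m - a - b := by linarith [m.cast_nonneg (α := ℝ)]
    have hcm (n : ℕ) : c + m + n ≠ 0 := by simpa [add_assoc] using hc (m + n)
    rw [ih, hypergeom_eq_mul_hypergeom_add_one hm hcm, ← mul_assoc,
      div_mul_div_comm (poch (c - a) m * poch (c - b) m), Nat.cast_succ, ← add_assoc, poch_succ,
      poch_succ, poch_succ, poch_succ]
    congr 2 <;> ring

lemma abs_hypergeomTerm_le {A B x₀ x : ℝ} (ha : |a| ≤ A) (hb : |b| ≤ B) (hx₀ : 0 < x₀)
    (hx : x₀ ≤ x) (n : ℕ) : |hypergeomTerm a b x n| ≤ hypergeomTerm A B x₀ n := by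
  have hA : 0 ≤ A := (abs_nonneg a).trans ha
  have hB : 0 ≤ B := (abs_nonneg b).trans hb
  have hpx₀ := poch_pos hx₀ n
  have hpx := poch_le_poch hx₀.le hx n
  have hfac : (0 : ℝ) < n ! := by positivity
  rw [hypergeomTerm, hypergeomTerm, abs_div, abs_of_pos (mul_pos (hpx₀.trans_le hpx) hfac),
    abs_mul]
  exact div_le_div₀ (mul_nonneg (poch_nonneg hA n) (poch_nonneg hB n))
    (mul_le_mul (abs_poch_le ha n) (abs_poch_le hb n) (abs_nonneg _) (poch_nonneg hA n))
    (by positivity) (by gcongr)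

lemma tendsto_hypergeomTerm_atTop (a b : ℝ) (n : ℕ) :
    Tendsto (fun x => hypergeomTerm a b x n) atTop (𝓝 (if n = 0 then 1 else 0)) := by
  cases n with
  | zero => simp [hypergeomTerm]
  | succ n =>
    rw [if_neg n.succ_ne_zero]
    exact tendsto_const_nhds.div_atTop <|
      (tendsto_poch_atTop n).atTop_mul_const (by positivity)

lemma tendsto_hypergeom_atTop (a b : ℝ) : Tendsto (hypergeom a b) atTop (𝓝 1) := by
  set A := max |a| |b|
  have hx₀ : 0 < 2 * A + 1 := by positivity
  have hbound : ∀ᶠ x in atTop, ∀ n, ‖hypergeomTerm a b x n‖ ≤ hypergeomTerm A A (2 * A + 1) n :=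
    (eventually_ge_atTop _).mono fun x hx n =>
      abs_hypergeomTerm_le (le_max_left _ _) (le_max_right _ _) hx₀ hx n
  have := tendsto_tsum_of_dominated_convergence (summable_hypergeomTerm (by linarith))
    (tendsto_hypergeomTerm_atTop a b) hbound
  rwa [tsum_ite_eq] at this

end GaussSeries

/-- Also true when `Γ t₁ Γ t₂ = 0`, thanks to the convention `x / 0 = 0`: then one of the
`poch tᵢ m` vanishes for large `m`. -/
lemma tendsto_poch_mul_poch_div {s₁ s₂ t₁ t₂ : ℝ} (h : s₁ + s₂ = t₁ + t₂) :
    Tendsto (fun m => poch t₁ m * poch t₂ m / (poch s₁ m * poch s₂ m)) atTop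
      (𝓝 (Gamma s₁ * Gamma s₂ / (Gamma t₁ * Gamma t₂))) := by
  by_cases hΓ : Gamma t₁ * Gamma t₂ = 0
  · rw [hΓ, div_zero]
    obtain ⟨k, hk⟩ : ∃ k : ℕ, t₁ = -k ∨ t₂ = -k := by
      rcases mul_eq_zero.1 hΓ with h₁ | h₂
      · obtain ⟨k, hk⟩ := (Gamma_eq_zero_iff t₁).1 h₁; exact ⟨k, .inl hk⟩
      · obtain ⟨k, hk⟩ := (Gamma_eq_zero_iff t₂).1 h₂; exact ⟨k, .inr hk⟩
    refine tendsto_const_nhds.congr' ?_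
    filter_upwards [eventually_gt_atTop k] with m hm
    rcases hk with rfl | rfl <;> simp [poch_neg_natCast_eq_zero hm]
  rw [← tendsto_add_atTop_iff_nat 1]
  refine (((GammaSeq_tendsto_Gamma s₁).mul (GammaSeq_tendsto_Gamma s₂)).div
    ((GammaSeq_tendsto_Gamma t₁).mul (GammaSeq_tendsto_Gamma t₂)) hΓ).congr' ?_
  filter_upwards [eventually_gt_atTop 0] with m hm
  have hm : (0 : ℝ) < m := by exact_mod_cast hm
  have hpow : (m : ℝ) ^ s₁ * m ^ s₂ = m ^ t₁ * m ^ t₂ := by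
    rw [← rpow_add hm, ← rpow_add hm, h]
  have hK : (m : ℝ) ^ t₁ * m ! * ((m : ℝ) ^ t₂ * m !) ≠ 0 := by positivity
  have hnum : (m : ℝ) ^ s₁ * m ! * ((m : ℝ) ^ s₂ * m !)
      = (m : ℝ) ^ t₁ * m ! * ((m : ℝ) ^ t₂ * m !) := by
    rw [mul_mul_mul_comm, hpow, mul_mul_mul_comm]
  show GammaSeq s₁ m * GammaSeq s₂ m / (GammaSeq t₁ m * GammaSeq t₂ m) = _
  simp only [GammaSeq_eq]
  calc _ = (m : ℝ) ^ s₁ * m ! * ((m : ℝ) ^ s₂ * m !)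
        * ((m : ℝ) ^ t₁ * m ! * ((m : ℝ) ^ t₂ * m !))⁻¹
        * (poch t₁ (m + 1) * poch t₂ (m + 1) / (poch s₁ (m + 1) * poch s₂ (m + 1))) := by
          simp only [div_eq_mul_inv, mul_inv, inv_inv]
          ring
    _ = _ := by rw [hnum, mul_inv_cancel₀ hK, one_mul]

theorem stmt15 (a b c : ℝ) (h : 0 < c - a - b) (hc : ∀ n : ℕ, c ≠ -(n : ℝ)) :
    HasSum (fun n : ℕ => poch a n * poch b n / (poch c n * n.factorial))
      (Real.Gamma c * Real.Gamma (c - a - b) / (Real.Gamma (c - a) * Real.Gamma (c - b))) := by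
  have hc' (n : ℕ) : c + n ≠ 0 := fun h0 => hc n (by linarith)
  have hlim := (tendsto_poch_mul_poch_div (by ring : c + (c - a - b) = (c - a) + (c - b))).mul
    ((tendsto_hypergeom_atTop a b).comp <|
      tendsto_atTop_add_const_left _ c tendsto_natCast_atTop_atTop)
  rw [mul_one] at hlim
  have hval := tendsto_nhds_unique
    (tendsto_const_nhds.congr (hypergeom_eq_poch_mul_hypergeom_add_nat h hc')) hlim
  exact hval ▸ (summable_hypergeomTerm h).hasSum
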